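/- arXiv:1705.02216 — 2 statements merged into one kernel-verified Lean document; each statement's English description precedes it below -/
import Mathlib

section
/- Let $K_1, K_2, K_{12}, I_1, I_2, I_{12}$ be subspaces of a vector space $V$ with $I_{12} \subseteq I_1$, $I_{12} \subseteq I_2$, $I_1 \subseteq K_1$, $I_2 \subseteq K_2$, $K_1 \subseteq K_{12}$, $K_2 \subseteq K_{12}$. If the quotient $K_1/I_1$ is infinite dimensional, then at least one of the quotients $(K_1 \cap K_2)/I_{12}$ and $K_{12}/(I_1 + I_2)$ is infinite dimensional. -/
/-!
Inside `K1 / I1` consider the subspace `P = ((I1 + I2) ∩ K1) / I1`. The quotient by it,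
`K1 / ((I1 + I2) ∩ K1)`, embeds into `K12 / (I1 + I2)`. By the modular law
`(I1 + I2) ∩ K1 = I1 + I2 ∩ K1 ⊆ I1 + K1 ∩ K2`, so `P` lies in the image of `(K1 ∩ K2) / I12`
in `K1 / I1`. If both `(K1 ∩ K2) / I12` and `K12 / (I1 + I2)` were finite dimensional, so would
be `K1 / I1`.
-/

theorem inf_sup_le_sup_inf_of_le {α : Type*} [Lattice α] [IsModularLattice α] {a b c d : α}
    (hac : a ≤ c) (hbd : b ≤ d) : c ⊓ (a ⊔ b) ≤ a ⊔ c ⊓ d :=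
  calc c ⊓ (a ⊔ b) = a ⊔ b ⊓ c := by rw [inf_comm, sup_inf_assoc_of_le b hac]
    _ ≤ a ⊔ c ⊓ d := sup_le_sup_left (inf_comm b c ▸ inf_le_inf_left c hbd) a

namespace Submodule

variable {R M : Type*} [Ring R] [AddCommGroup M] [Module R M]

theorem finite_quotient_of_finite_map_mkQ {A C : Submodule R M} (hAC : A ≤ C)
    [Module.Finite R (C.map A.mkQ)] [Module.Finite R (M ⧸ C)] : Module.Finite R (M ⧸ A) :=
  have : Module.Finite R ((M ⧸ A) ⧸ C.map A.mkQ) :=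
    Module.Finite.equiv (quotientQuotientEquivQuotient A C hAC).symm
  Module.Finite.of_submodule_quotient (C.map A.mkQ)

theorem finite_range_of_le_ker {M₂ : Type*} [AddCommGroup M₂] [Module R M₂] (f : M →ₗ[R] M₂)
    {p : Submodule R M} (h : p ≤ LinearMap.ker f) [Module.Finite R (M ⧸ p)] :
    Module.Finite R (LinearMap.range f) := by
  rw [← range_liftQ p f h]
  infer_instance

theorem comap_subtype_sup_le_sup_comap_subtype_inf {A B C D : Submodule R M} (hAC : A ≤ C)
    (hBD : B ≤ D) : (A ⊔ B).comap C.subtype ≤ A.comap C.subtype ⊔ (C ⊓ D).comap C.subtype := by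
  rw [← map_le_map_iff_of_injective C.injective_subtype, map_sup, map_comap_subtype,
    map_comap_subtype, map_comap_subtype, inf_eq_right.mpr hAC, inf_left_idem]
  exact inf_sup_le_sup_inf_of_le hAC hBD

theorem finiteDimensional_quotient_comap_subtype_of_le {K V : Type*} [DivisionRing K]
    [AddCommGroup V] [Module K V] {B B' : Submodule K V} (A : Submodule K V) (h : B ≤ B')
    [FiniteDimensional K (B' ⧸ A.comap B'.subtype)] :
    FiniteDimensional K (B ⧸ A.comap B.subtype) := by
  have hA : A.comap B.subtype ≤ (A.comap B'.subtype).comap (inclusion h) := by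
    rw [← comap_comp, subtype_comp_inclusion]
  refine FiniteDimensional.of_injective (mapQ _ _ (inclusion h) hA) ?_
  rw [← LinearMap.ker_eq_bot, ker_mapQ, ← comap_comp, subtype_comp_inclusion, mkQ_map_self]

end Submodule

theorem stmt_0_general {𝕜 V : Type*} [Field 𝕜] [AddCommGroup V] [Module 𝕜 V]
    (K1 K2 K12 I1 I2 I12 : Submodule 𝕜 V)
    (h1 : I12 ≤ I1) (h3 : I1 ≤ K1) (h4 : I2 ≤ K2)
    (h5 : K1 ≤ K12)
    (hinf : ¬ FiniteDimensional 𝕜 (↥K1 ⧸ (I1.comap K1.subtype))) :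
    ¬ FiniteDimensional 𝕜 (↥(K1 ⊓ K2) ⧸ (I12.comap (K1 ⊓ K2).subtype)) ∨
    ¬ FiniteDimensional 𝕜 (↥K12 ⧸ ((I1 ⊔ I2).comap K12.subtype)) := by
  by_contra! ⟨hmeet, hjoin⟩
  apply hinf
  set N := I1.comap K1.subtype
  set P := (I1 ⊔ I2).comap K1.subtype
  have hP : FiniteDimensional 𝕜 (K1 ⧸ P) :=
    Submodule.finiteDimensional_quotient_comap_subtype_of_le _ h5
  have hPN : FiniteDimensional 𝕜 (P.map N.mkQ) := by
    let φ := N.mkQ ∘ₗ Submodule.inclusion (inf_le_left : K1 ⊓ K2 ≤ K1)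
    have hφ : I12.comap (K1 ⊓ K2).subtype ≤ LinearMap.ker φ := fun _ hx ↦
      (Submodule.Quotient.mk_eq_zero _).mpr (h1 hx)
    have := Submodule.finite_range_of_le_ker φ hφ
    have hle : P.map N.mkQ ≤ LinearMap.range φ :=
      calc P.map N.mkQ ≤ (N ⊔ (K1 ⊓ K2).comap K1.subtype).map N.mkQ :=
            Submodule.map_mono (Submodule.comap_subtype_sup_le_sup_comap_subtype_inf h3 h4)
        _ = LinearMap.range φ := by
          rw [Submodule.map_sup, Submodule.mkQ_map_self, bot_sup_eq, LinearMap.range_comp,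
            Submodule.range_inclusion]
    exact Submodule.finiteDimensional_of_le hle
  exact Submodule.finite_quotient_of_finite_map_mkQ (C := P) (Submodule.comap_mono le_sup_left)

theorem stmt_0 {𝕜 V : Type*} [Field 𝕜] [AddCommGroup V] [Module 𝕜 V]
    (K1 K2 K12 I1 I2 I12 : Submodule 𝕜 V)
    (h1 : I12 ≤ I1) (h2 : I12 ≤ I2) (h3 : I1 ≤ K1) (h4 : I2 ≤ K2)
    (h5 : K1 ≤ K12) (h6 : K2 ≤ K12)
    (hinf : ¬ FiniteDimensional 𝕜 (↥K1 ⧸ (I1.comap K1.subtype))) :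
    ¬ FiniteDimensional 𝕜 (↥(K1 ⊓ K2) ⧸ (I12.comap (K1 ⊓ K2).subtype)) ∨
    ¬ FiniteDimensional 𝕜 (↥K12 ⧸ ((I1 ⊔ I2).comap K12.subtype)) :=
  stmt_0_general K1 K2 K12 I1 I2 I12 h1 h3 h4 h5 hinf
end

section
/- Let $K_1, K_2, K_{12}, I_1, I_2, I_{12}$ be subspaces of a vector space $V$ with $I_{12} \subseteq I_1 \subseteq K_1 \subseteq K_{12}$ and $I_{12} \subseteq I_2 \subseteq K_2 \subseteq K_{12}$. If both $(K_1 \cap K_2)/I_{12}$ and $K_{12}/(I_1 + I_2)$ are finite dimensional, then $K_1/I_1$ is finite dimensional. -/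
/-!
The natural map `K₁/I₁ → K₁₂/(I₁ + I₂)` has finite-dimensional target, and its kernel lies in the
image of `(K₁ ∩ K₂)/I₁₂ → K₁/I₁`: if `v ∈ K₁` is `a + b` with `a ∈ I₁`, `b ∈ I₂`, then
`b = v - a ∈ K₁ ∩ K₂` and `b ≡ v` modulo `I₁`. A space whose image and kernel under a map are
both finite-dimensional is finite-dimensional.
-/

open LinearMap Submodule

theorem Module.Finite.of_ker_le_range {R M N P : Type*} [Ring R] [AddCommGroup M]
    [AddCommGroup N] [AddCommGroup P] [Module R M] [Module R N] [Module R P]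
    [Module.Finite R P] [IsNoetherian R N] (f : P →ₗ[R] M) (g : M →ₗ[R] N)
    (h : g.ker ≤ f.range) : Module.Finite R M := by
  have : Module.Finite R (M ⧸ f.range) :=
    .of_injective (f.range.mapQ _ g (le_comap_map g _)) <| by
      rw [← ker_eq_bot, ker_mapQ, comap_map_eq_self h, mkQ_map_self]
  exact .of_submodule_quotient f.range

namespace Submodule

variable {R M : Type*} [Ring R] [AddCommGroup M] [Module R M]

def subquotientMap {B C I J : Submodule R M} (hB : B ≤ C) (hI : I ≤ J) :
    (B ⧸ I.comap B.subtype) →ₗ[R] C ⧸ J.comap C.subtype :=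
  mapQ _ _ (inclusion hB) fun _ hx => hI hx

theorem subquotientMap_mk {B C I J : Submodule R M} (hB : B ≤ C) (hI : I ≤ J) (x : B) :
    subquotientMap hB hI (Quotient.mk x) = Quotient.mk (inclusion hB x) :=
  rfl

theorem mk_mem_ker_subquotientMap {B C I J : Submodule R M} (hB : B ≤ C) (hI : I ≤ J) (x : B) :
    Quotient.mk x ∈ (subquotientMap hB hI).ker ↔ (x : M) ∈ J := by
  rw [mem_ker, subquotientMap_mk, Quotient.mk_eq_zero]
  rfl

theorem ker_subquotientMap_le_range {K₁ K₂ K₁₂ I₁ I₂ I₁₂ : Submodule R M}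
    (h₁ : I₁₂ ≤ I₁) (h₂ : I₁ ≤ K₁) (h₃ : K₁ ≤ K₁₂) (h₅ : I₂ ≤ K₂) :
    (subquotientMap h₃ (le_sup_left : I₁ ≤ I₁ ⊔ I₂)).ker ≤
      (subquotientMap (inf_le_left : K₁ ⊓ K₂ ≤ K₁) h₁).range := by
  intro x hx
  obtain ⟨v, rfl⟩ := Quotient.mk_surjective _ x
  obtain ⟨a, ha, b, hb, hab⟩ := mem_sup.mp ((mk_mem_ker_subquotientMap _ _ v).mp hx)
  have hbK₁ : b ∈ K₁ := by
    rw [← add_sub_cancel_left a b, hab]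
    exact sub_mem v.2 (h₂ ha)
  refine ⟨Quotient.mk ⟨b, hbK₁, h₅ hb⟩, (Quotient.eq _).mpr ?_⟩
  show b - v ∈ I₁
  rw [← hab, sub_add_cancel_right]
  exact neg_mem ha

end Submodule

theorem stmt_3_general {𝕜 V : Type*} [Field 𝕜] [AddCommGroup V] [Module 𝕜 V]
    (K1 K2 K12 I1 I2 I12 : Submodule 𝕜 V)
    (h1 : I12 ≤ I1) (h2 : I1 ≤ K1) (h3 : K1 ≤ K12)
    (h5 : I2 ≤ K2)
    (hfd1 : FiniteDimensional 𝕜 (↥(K1 ⊓ K2) ⧸ (I12.comap (K1 ⊓ K2).subtype)))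
    (hfd2 : FiniteDimensional 𝕜 (↥K12 ⧸ ((I1 ⊔ I2).comap K12.subtype))) :
    FiniteDimensional 𝕜 (↥K1 ⧸ (I1.comap K1.subtype)) :=
  .of_ker_le_range _ _ (ker_subquotientMap_le_range h1 h2 h3 h5)

theorem stmt_3 {𝕜 V : Type*} [Field 𝕜] [AddCommGroup V] [Module 𝕜 V]
    (K1 K2 K12 I1 I2 I12 : Submodule 𝕜 V)
    (h1 : I12 ≤ I1) (h2 : I1 ≤ K1) (h3 : K1 ≤ K12)
    (h4 : I12 ≤ I2) (h5 : I2 ≤ K2) (h6 : K2 ≤ K12)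
    (hfd1 : FiniteDimensional 𝕜 (↥(K1 ⊓ K2) ⧸ (I12.comap (K1 ⊓ K2).subtype)))
    (hfd2 : FiniteDimensional 𝕜 (↥K12 ⧸ ((I1 ⊔ I2).comap K12.subtype))) :
    FiniteDimensional 𝕜 (↥K1 ⧸ (I1.comap K1.subtype)) :=
  stmt_3_general K1 K2 K12 I1 I2 I12 h1 h2 h3 h5 hfd1 hfd2
end
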